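/- (Lemma `tecnico`, Appendix) Fix ℓ ∈ ℤ^ν \ {0} and let ς : R_M → ℝ be Lipschitz with constant c₀, where 0 ≤ c₀ < |ℓ| (i.e. |ς(ω₁) − ς(ω₂)| ≤ c₀|ω₁ − ω₂| for all ω₁, ω₂ ∈ R_M). Define f(ω) := ω·ℓ + ς(ω). Then for every δ ≥ 0, the Lebesgue measure of the set A := {ω ∈ R_M : |f(ω)| ≤ δ} satisfies |A| ≤ (2δ/(|ℓ| − c₀))·(4M)^{ν−1}. -/

import Mathlib

noncomputable section

open MeasureTheory

/-- The closed annulus `R_M = {ω ∈ ℝ^ν : M ≤ |ω| ≤ 2M}`. -/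
def RM (ν : ℕ) (M : ℝ) : Set (EuclideanSpace ℝ (Fin ν)) :=
  {ω | M ≤ ‖ω‖ ∧ ‖ω‖ ≤ 2 * M}

/-- Euclidean norm of an integer vector `ℓ ∈ ℤ^ν`. -/
def znorm {ν : ℕ} (ℓ : Fin ν → ℤ) : ℝ := Real.sqrt (∑ i, ((ℓ i : ℝ)) ^ 2)

/-- The inner product `ω·ℓ`. -/
def dotZ {ν : ℕ} (ω : EuclideanSpace ℝ (Fin ν)) (ℓ : Fin ν → ℤ) : ℝ :=
  ∑ i, ω i * (ℓ i : ℝ)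

/-! Moving a point by `t` in the direction of `ℓ` changes `ω·ℓ` by `t|ℓ|` and `ς` by at most
`c₀|t|`, so every line parallel to `ℓ` meets `A` in a set of length at most `2δ / (|ℓ| - c₀)`.
In an orthonormal frame whose first vector is `ℓ / |ℓ|`, the other coordinates of a point of `A`
lie in `[-2M, 2M]`, and Fubini gives the bound. -/

open Set Module RealInnerProductSpace

namespace MeasureTheory.Measure

theorem prod_le_ofReal_mul_of_fst_sub_le {β : Type*} [MeasurableSpace β] (μ : Measure β)
    [SFinite μ] {D : Set (ℝ × β)} (hD : MeasurableSet D) {Q : Set β} {L : ℝ}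
    (hDL : ∀ p ∈ D, ∀ q ∈ D, p.2 = q.2 → |p.1 - q.1| ≤ L) (hDQ : ∀ p ∈ D, p.2 ∈ Q) :
    (volume.prod μ) D ≤ ENNReal.ofReal L * μ Q := by
  have hslice :
      ∀ y, volume ((fun t => (t, y)) ⁻¹' D) ≤ Q.indicator (fun _ => ENNReal.ofReal L) y := by
    intro y
    by_cases hy : y ∈ Q
    · rw [indicator_of_mem hy]
      refine (Real.volume_le_diam _).trans (Metric.ediam_le fun t ht t' ht' => ?_)
      rw [edist_dist, Real.dist_eq]
      exact ENNReal.ofReal_le_ofReal (hDL _ ht _ ht' rfl)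
    · have hempty : (fun t => (t, y)) ⁻¹' D = ∅ :=
        eq_empty_of_forall_notMem fun t ht => hy (hDQ _ ht)
      rw [indicator_of_notMem hy, hempty, measure_empty]
  calc (volume.prod μ) D = ∫⁻ y, volume ((fun t => (t, y)) ⁻¹' D) ∂μ := prod_apply_symm hD
    _ ≤ ∫⁻ y, Q.indicator (fun _ => ENNReal.ofReal L) y ∂μ := lintegral_mono hslice
    _ ≤ ENNReal.ofReal L * μ Q := lintegral_indicator_const_le Q _

end MeasureTheory.Measure

theorem volume_le_of_add_smul_mem {F : Type*} [NormedAddCommGroup F] [InnerProductSpace ℝ F]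
    [FiniteDimensional ℝ F] [MeasurableSpace F] [BorelSpace F] {n : ℕ}
    (hF : finrank ℝ F = n + 1) {e : F} (he : ‖e‖ = 1) {A : Set F} (hA : MeasurableSet A)
    {R L : ℝ} (hAR : ∀ x ∈ A, ‖x‖ ≤ R) (hAL : ∀ x ∈ A, ∀ t : ℝ, x + t • e ∈ A → |t| ≤ L) :
    volume A ≤ ENNReal.ofReal L * ENNReal.ofReal (2 * R) ^ n := by
  have he' : Orthonormal ℝ (({0} : Set (Fin (n + 1))).domRestrict fun _ => e) :=
    ⟨fun _ => he, fun i j hij => absurd (Subtype.ext (i.2.trans j.2.symm)) hij⟩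
  obtain ⟨b, hb⟩ := Orthonormal.exists_orthonormalBasis_extension_of_card_eq (by simp [hF]) he'
  have hb0 : b 0 = e := hb 0 rfl
  set Ψ : ℝ × (Fin n → ℝ) → F := fun p =>
    b.repr.symm (WithLp.toLp 2 ((MeasurableEquiv.piFinSuccAbove (fun _ => ℝ) 0).symm p))
  have hΨ : MeasurePreserving Ψ (volume.prod volume) volume :=
    b.measurePreserving_repr_symm.comp <| (PiLp.volume_preserving_toLp _).comp
      (volume_preserving_piFinSuccAbove (fun _ => ℝ) 0).symm
  have hreprΨ : ∀ p, b.repr (Ψ p) = WithLp.toLp 2 (Fin.cons p.1 p.2) := fun p => by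
    simp only [Ψ, LinearIsometryEquiv.apply_symm_apply, MeasurableEquiv.piFinSuccAbove_symm_apply,
      Fin.insertNthEquiv_zero]
    rfl
  have hΨ_add : ∀ t t' y, Ψ (t', y) = Ψ (t, y) + (t' - t) • e := fun t t' y => by
    apply b.repr.injective
    ext j
    induction j using Fin.cases <;> simp [hreprΨ, ← hb0]
  have hΨ_coord : ∀ t y j, |y j| ≤ ‖Ψ (t, y)‖ := fun t y j => by
    rw [← b.repr.norm_map, hreprΨ]
    simpa using PiLp.norm_apply_le (WithLp.toLp 2 (Fin.cons t y : Fin (n + 1) → ℝ)) j.succ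
  calc volume A = (volume.prod volume) (Ψ ⁻¹' A) :=
        (hΨ.measure_preimage hA.nullMeasurableSet).symm
    _ ≤ ENNReal.ofReal L * volume (univ.pi fun _ : Fin n => Icc (-R) R) := by
        refine Measure.prod_le_ofReal_mul_of_fst_sub_le _ (hΨ.measurable hA) ?_ ?_
        · rintro ⟨t, y⟩ ht ⟨t', y'⟩ ht' (rfl : y = y')
          exact hAL _ ht' (t - t') (by rwa [← hΨ_add])
        · rintro ⟨t, y⟩ h
          exact mem_univ_pi.2 fun j => abs_le.1 ((hΨ_coord t y j).trans (hAR _ h))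
    _ = ENNReal.ofReal L * ENNReal.ofReal (2 * R) ^ n := by
        simp [Real.volume_Icc_pi, two_mul]

theorem abs_le_of_add_smul_mem_sublevel {F : Type*} [NormedAddCommGroup F]
    [InnerProductSpace ℝ F] {S : Set F} {ς : F → ℝ} {c₀ δ : ℝ} {v e x : F} {t : ℝ}
    (hς : ∀ x ∈ S, ∀ y ∈ S, |ς x - ς y| ≤ c₀ * ‖x - y‖) (hc₀ : c₀ < ‖v‖) (he : ‖e‖ = 1)
    (hve : ⟪v, e⟫ = ‖v‖) (hx : x ∈ {x ∈ S | |⟪v, x⟫ + ς x| ≤ δ})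
    (hxt : x + t • e ∈ {x ∈ S | |⟪v, x⟫ + ς x| ≤ δ}) :
    |t| ≤ 2 * δ / (‖v‖ - c₀) := by
  have hinner : ⟪v, x + t • e⟫ = ⟪v, x⟫ + t * ‖v‖ := by
    rw [inner_add_right, inner_smul_right, hve]
  have hςt : |ς (x + t • e) - ς x| ≤ c₀ * |t| := by
    simpa [norm_smul, he] using hς _ hxt.1 _ hx.1
  have hvt : ‖v‖ * |t| ≤ 2 * δ + c₀ * |t| := by
    have hsplit : ‖v‖ * t = (⟪v, x + t • e⟫ + ς (x + t • e)) - (⟪v, x⟫ + ς x)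
        - (ς (x + t • e) - ς x) := by
      rw [hinner]; ring
    calc ‖v‖ * |t| = |‖v‖ * t| := by rw [abs_mul, abs_norm]
      _ ≤ |⟪v, x + t • e⟫ + ς (x + t • e)| + |⟪v, x⟫ + ς x| + |ς (x + t • e) - ς x| := by
        rw [hsplit]; exact (abs_sub _ _).trans (add_le_add_left (abs_sub _ _) _)
      _ ≤ 2 * δ + c₀ * |t| := by linarith [hx.2, hxt.2]
  rw [le_div_iff₀ (sub_pos.2 hc₀)]
  linarith

theorem lemma_tecnico_general (ν : ℕ) (hν : 1 ≤ ν) (M : ℝ) (hM : 0 < M)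
    (ℓ : Fin ν → ℤ)
    (c₀ : ℝ) (hc₀ : 0 ≤ c₀) (hc₀ℓ : c₀ < znorm ℓ)
    (ς : EuclideanSpace ℝ (Fin ν) → ℝ)
    (hς : ∀ ω₁ ∈ RM ν M, ∀ ω₂ ∈ RM ν M, |ς ω₁ - ς ω₂| ≤ c₀ * ‖ω₁ - ω₂‖)
    (δ : ℝ) (hδ : 0 ≤ δ) :
    volume {ω ∈ RM ν M | |dotZ ω ℓ + ς ω| ≤ δ} ≤
      ENNReal.ofReal (2 * δ / (znorm ℓ - c₀) * (4 * M) ^ (ν - 1)) := by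
  obtain ⟨n, rfl⟩ : ∃ n, ν = n + 1 := ⟨ν - 1, by omega⟩
  set v : EuclideanSpace ℝ (Fin (n + 1)) := WithLp.toLp 2 fun i => (ℓ i : ℝ)
  have hv : ‖v‖ = znorm ℓ := by simp [v, EuclideanSpace.norm_eq, znorm]
  have hdot : ∀ ω, dotZ ω ℓ = ⟪v, ω⟫ := fun ω => by
    simp [v, dotZ, PiLp.inner_apply, mul_comm]
  have hc : c₀ < ‖v‖ := hv ▸ hc₀ℓ
  have hv₀ : 0 < ‖v‖ := hc₀.trans_lt hc
  have he : ‖‖v‖⁻¹ • v‖ = 1 := by rw [norm_smul, norm_inv, norm_norm, inv_mul_cancel₀ hv₀.ne']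
  have hve : ⟪v, ‖v‖⁻¹ • v⟫ = ‖v‖ := by
    rw [inner_smul_right, real_inner_self_eq_norm_sq]; field_simp
  have hRM : IsClosed (RM (n + 1) M) :=
    (isClosed_le continuous_const continuous_norm).inter
      (isClosed_le continuous_norm continuous_const)
  have hςc : ContinuousOn ς (RM (n + 1) M) :=
    (LipschitzOnWith.of_dist_le' (by simpa [Real.dist_eq, dist_eq_norm] using hς)).continuousOn
  simp only [hdot, ← hv, add_tsub_cancel_right]
  have hA : IsClosed {ω ∈ RM (n + 1) M | |⟪v, ω⟫ + ς ω| ≤ δ} :=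
    ((continuous_const.inner continuous_id).continuousOn.add hςc).abs.preimage_isClosed_of_isClosed
      hRM isClosed_Iic
  calc _ ≤ ENNReal.ofReal (2 * δ / (‖v‖ - c₀)) * ENNReal.ofReal (2 * (2 * M)) ^ n :=
        volume_le_of_add_smul_mem finrank_euclideanSpace_fin he hA.measurableSet
          (fun ω hω => hω.1.2) fun ω hω t hωt =>
            abs_le_of_add_smul_mem_sublevel hς hc he hve hω hωt
    _ = _ := by
        rw [← ENNReal.ofReal_pow (by positivity),
          ← ENNReal.ofReal_mul (div_nonneg (by positivity) (sub_pos.2 hc).le)]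
        ring_nf

/-- **Lemma (tecnico).** Measure estimate for sublevel sets of `f(ω) = ω·ℓ + ς(ω)`. -/
theorem lemma_tecnico (ν : ℕ) (hν : 1 ≤ ν) (M : ℝ) (hM : 0 < M)
    (ℓ : Fin ν → ℤ) (hℓ : ℓ ≠ 0)
    (c₀ : ℝ) (hc₀ : 0 ≤ c₀) (hc₀ℓ : c₀ < znorm ℓ)
    (ς : EuclideanSpace ℝ (Fin ν) → ℝ)
    (hς : ∀ ω₁ ∈ RM ν M, ∀ ω₂ ∈ RM ν M, |ς ω₁ - ς ω₂| ≤ c₀ * ‖ω₁ - ω₂‖)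
    (δ : ℝ) (hδ : 0 ≤ δ) :
    volume {ω ∈ RM ν M | |dotZ ω ℓ + ς ω| ≤ δ} ≤
      ENNReal.ofReal (2 * δ / (znorm ℓ - c₀) * (4 * M) ^ (ν - 1)) :=
  lemma_tecnico_general ν hν M hM ℓ c₀ hc₀ hc₀ℓ ς hς δ hδ
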